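/- Let G be a simple graph with no cycle of length 3 and no cycle of length 5, and let v and w be nonadjacent vertices of G with at least one common neighbor. If the graph obtained from G by identifying v and w contains a cycle of length 5, then G contains a cycle of length 7 passing through both v and w. -/

import Mathlib

open SimpleGraph

/-- A plane (embedded) graph on vertex set `V`: a simple graph together with a
finite set of faces, each given by its (cyclic) boundary walk, a designated
outer face, such that consecutive vertices on a boundary walk are adjacent,
every edge lies on exactly two face incidences (counted with multiplicity),
and Euler's formula holds when the graph is connected. -/
structure PlaneGraph (V : Type) [Fintype V] [DecidableEq V] where
  graph : SimpleGraph V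
  Face : Type
  fintypeFace : Fintype Face
  boundary : Face → List V
  outer : Face
  boundary_adj : ∀ f : Face, ∀ p ∈ (boundary f).zip ((boundary f).rotate 1), graph.Adj p.1 p.2
  edge_twice : ∀ e ∈ graph.edgeSet,
    ((@Finset.univ Face fintypeFace).sum fun f =>
      (((boundary f).zip ((boundary f).rotate 1)).map fun p => s(p.1, p.2)).count e) = 2
  euler : graph.Connected →
    Fintype.card V + @Fintype.card Face fintypeFace = Nat.card graph.edgeSet + 2

namespace PlaneGraph

variable {V : Type} [Fintype V] [DecidableEq V]

instance (P : PlaneGraph V) : Fintype P.Face := P.fintypeFace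

/-- The degree of a vertex. -/
noncomputable def deg (P : PlaneGraph V) (v : V) : ℕ := Nat.card {u : V // P.graph.Adj v u}

/-- The length of (the boundary walk of) a face. -/
def faceLen (P : PlaneGraph V) (f : P.Face) : ℕ := (P.boundary f).length

/-- A vertex is incident with a face if it lies on its boundary walk. -/
def VertexOnFace (P : PlaneGraph V) (v : V) (f : P.Face) : Prop := v ∈ P.boundary f

/-- An edge `ab` is incident with a face if `a` and `b` appear consecutively
(cyclically) on its boundary walk. -/
def EdgeOnFace (P : PlaneGraph V) (a b : V) (f : P.Face) : Prop :=
  (a, b) ∈ (P.boundary f).zip ((P.boundary f).rotate 1) ∨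
  (b, a) ∈ (P.boundary f).zip ((P.boundary f).rotate 1)

/-- Level-1 vertices (relative to the designated set `T`): vertices not in `T`
of degree at most 3. -/
def Level1 (P : PlaneGraph V) (T : Set V) (v : V) : Prop := v ∉ T ∧ P.deg v ≤ 3

/-- Vertices of level at most 2 (relative to `T`): vertices not in `T` having at
most 3 neighbors outside `V₁` (this contains `V₁` itself). -/
noncomputable def LevelLe2 (P : PlaneGraph V) (T : Set V) (v : V) : Prop :=
  v ∉ T ∧ Nat.card {u : V // P.graph.Adj v u ∧ ¬ P.Level1 T u} ≤ 3

/-- `w` is a good neighbor of `v`: `w` is a neighbor of `v` of level at most 2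
such that the face incident with `v` but not with the edge `vw` is a 4-face. -/
def GoodNbr (P : PlaneGraph V) (T : Set V) (v w : V) : Prop :=
  P.graph.Adj v w ∧ P.LevelLe2 T w ∧
  ∃ f : P.Face, P.VertexOnFace v f ∧ ¬ P.EdgeOnFace v w f ∧ P.faceLen f = 4

/-- A good vertex: a 3-vertex incident with three distinct faces having a good
neighbor. -/
def Good (P : PlaneGraph V) (T : Set V) (v : V) : Prop :=
  P.deg v = 3 ∧
  (∃ f1 f2 f3 : P.Face, f1 ≠ f2 ∧ f1 ≠ f3 ∧ f2 ≠ f3 ∧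
    P.VertexOnFace v f1 ∧ P.VertexOnFace v f2 ∧ P.VertexOnFace v f3) ∧
  ∃ w : V, P.GoodNbr T v w

end PlaneGraph

/-- `G` has no cycle of length `k`. -/
def NoCycleLen {V : Type} (G : SimpleGraph V) (k : ℕ) : Prop :=
  ∀ (v : V) (c : G.Walk v v), c.IsCycle → c.length ≠ k

/-- `G` has no separating cycle of length `k`: deleting the vertices of any
`k`-cycle leaves a (pre)connected graph. -/
def NoSepCycleLen {V : Type} (G : SimpleGraph V) (k : ℕ) : Prop :=
  ∀ (v : V) (c : G.Walk v v), c.IsCycle → c.length = k →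
    (G.induce {x | x ∉ c.support}).Preconnected

/-- A proper `k`-coloring of `G`. -/
def IsProperColoring {V : Type} (G : SimpleGraph V) (k : ℕ) (φ : V → Fin k) : Prop :=
  ∀ a b : V, G.Adj a b → φ a ≠ φ b

/-- The graph obtained from `G` by identifying the two (nonadjacent) vertices
`v` and `w`: on the vertex set `V ∖ {w}`, the vertex `v` plays the role of the
identified vertex `v*w`, adjacent to all former neighbors of `v` or of `w`. -/
def Identify {V : Type} (G : SimpleGraph V) (v w : V) : SimpleGraph {x : V // x ≠ w} where
  Adj a b := (G.Adj a.1 b.1 ∨ (a.1 = v ∧ G.Adj w b.1) ∨ (b.1 = v ∧ G.Adj w a.1)) ∧ a ≠ b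
  symm := by
    constructor
    rintro a b ⟨h, hne⟩
    refine ⟨?_, Ne.symm hne⟩
    rcases h with h | ⟨h1, h2⟩ | ⟨h1, h2⟩
    · exact Or.inl h.symm
    · exact Or.inr (Or.inr ⟨h1, h2⟩)
    · exact Or.inr (Or.inl ⟨h1, h2⟩)
  loopless := ⟨fun a h => h.2 rfl⟩

/-- One recoloring step: two colorings differing on exactly one vertex. -/
def RecolorStep {V : Type} {k : ℕ} (φ ψ : V → Fin k) : Prop := ∃! x : V, φ x ≠ ψ x

/-- A valid recoloring sequence for `G`: a list of proper `k`-colorings in which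
consecutive colorings differ on exactly one vertex. -/
def RecolorSeq {V : Type} (G : SimpleGraph V) (k : ℕ) (L : List (V → Fin k)) : Prop :=
  (∀ φ ∈ L, IsProperColoring G k φ) ∧ L.Chain' RecolorStep

/-- The number of times the vertex `x` gets recolored along the sequence `L`. -/
def recolorCount {V : Type} {k : ℕ} (L : List (V → Fin k)) (x : V) : ℕ :=
  (L.zip L.tail).countP fun p => decide (p.1 x ≠ p.2 x)

/-- The reconfiguration graph `C_k(G)`: vertices are the proper `k`-colorings of
`G`, two colorings being adjacent when they differ on exactly one vertex. -/
def ReconfGraph {V : Type} (G : SimpleGraph V) (k : ℕ) :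
    SimpleGraph {φ : V → Fin k // IsProperColoring G k φ} where
  Adj φ ψ := ∃! x : V, φ.1 x ≠ ψ.1 x
  symm := by
    constructor
    rintro φ ψ ⟨x, hx, hu⟩
    exact ⟨x, Ne.symm hx, fun y hy => hu y (Ne.symm hy)⟩
  loopless := ⟨fun φ ⟨x, hx, _⟩ => hx rfl⟩

private lemma mkCycle3 {V : Type} {G : SimpleGraph V} {a b c : V}
    (h1 : G.Adj a b) (h2 : G.Adj b c) (h3 : G.Adj c a) :
    ∃ (z : V) (cyc : G.Walk z z), cyc.IsCycle ∧ cyc.length = 3 := by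
  refine ⟨a, .cons h1 (.cons h2 (.cons h3 .nil)), ?_, rfl⟩
  have := h1.ne; have := h2.ne; have := h3.ne
  simp [Walk.isCycle_def, Walk.isTrail_def, Sym2.eq_iff]
  aesop

private lemma mkCycle5 {V : Type} {G : SimpleGraph V} {a b c d e : V}
    (h1 : G.Adj a b) (h2 : G.Adj b c) (h3 : G.Adj c d) (h4 : G.Adj d e) (h5 : G.Adj e a)
    (hac : a ≠ c) (had : a ≠ d) (hbd : b ≠ d) (hbe : b ≠ e) (hce : c ≠ e) :
    ∃ (z : V) (cyc : G.Walk z z), cyc.IsCycle ∧ cyc.length = 5 := by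
  refine ⟨a, .cons h1 (.cons h2 (.cons h3 (.cons h4 (.cons h5 .nil)))), ?_, rfl⟩
  have := h1.ne; have := h2.ne; have := h3.ne; have := h4.ne; have := h5.ne
  simp [Walk.isCycle_def, Walk.isTrail_def, Sym2.eq_iff]
  aesop

private lemma mkCycle7 {V : Type} {G : SimpleGraph V} {v a b c d w x : V}
    (e1 : G.Adj v a) (e2 : G.Adj a b) (e3 : G.Adj b c) (e4 : G.Adj c d)
    (e5 : G.Adj d w) (e6 : G.Adj w x) (e7 : G.Adj x v)
    (n1 : v ≠ b) (n2 : v ≠ c) (n3 : v ≠ d) (n4 : v ≠ w)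
    (n5 : a ≠ c) (n6 : a ≠ d) (n7 : a ≠ w) (n8 : a ≠ x)
    (n9 : b ≠ d) (n10 : b ≠ w) (n11 : b ≠ x)
    (n12 : c ≠ w) (n13 : c ≠ x) (n14 : d ≠ x) :
    ∃ (z : V) (cyc : G.Walk z z), cyc.IsCycle ∧ cyc.length = 7 ∧
      v ∈ cyc.support ∧ w ∈ cyc.support := by
  refine ⟨v, .cons e1 (.cons e2 (.cons e3 (.cons e4 (.cons e5 (.cons e6 (.cons e7 .nil)))))),
    ?_, rfl, by simp, by simp⟩
  have := e1.ne; have := e2.ne; have := e3.ne; have := e4.ne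
  have := e5.ne; have := e6.ne; have := e7.ne
  simp [Walk.isCycle_def, Walk.isTrail_def, Sym2.eq_iff]
  aesop

private lemma walk5_decomp {V : Type} {G : SimpleGraph V} {u : V} (p : G.Walk u u)
    (h : p.length = 5) :
    ∃ (a b c d : V) (h1 : G.Adj u a) (h2 : G.Adj a b) (h3 : G.Adj b c) (h4 : G.Adj c d)
      (h5 : G.Adj d u),
      p = .cons h1 (.cons h2 (.cons h3 (.cons h4 (.cons h5 .nil)))) := by
  cases p with
  | nil => simp at h
  | cons h1 q =>
    cases q with
    | nil => simp at h
    | cons h2 q =>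
      cases q with
      | nil => simp at h
      | cons h3 q =>
        cases q with
        | nil => simp at h
        | cons h4 q =>
          cases q with
          | nil => simp at h
          | cons h5 q =>
            cases q with
            | nil => exact ⟨_, _, _, _, h1, h2, h3, h4, h5, rfl⟩
            | cons h6 q => simp at h

/-- If `G` has no 3-cycle and no 5-cycle, and `v`, `w` are
nonadjacent vertices with a common neighbor, and the graph obtained by
identifying `v` and `w` contains a 5-cycle, then `G` contains a 7-cycle passing
through both `v` and `w`. -/
theorem identify_five_cycle {V : Type} (G : SimpleGraph V)
    (h3 : NoCycleLen G 3) (h5 : NoCycleLen G 5)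
    (v w : V) (hvw : v ≠ w) (hnadj : ¬ G.Adj v w)
    (hcommon : ∃ x : V, G.Adj v x ∧ G.Adj w x)
    (h5' : ∃ (a : {x : V // x ≠ w}) (c : (Identify G v w).Walk a a),
      c.IsCycle ∧ c.length = 5) :
    ∃ (z : V) (c : G.Walk z z), c.IsCycle ∧ c.length = 7 ∧
      v ∈ c.support ∧ w ∈ c.support := by
  classical
  obtain ⟨x, hvx, hwx⟩ := hcommon
  obtain ⟨a0, c0, hcyc, hlen⟩ := h5'
  have edge_int : ∀ {s t : {x : V // x ≠ w}}, (Identify G v w).Adj s t → s.1 ≠ v → t.1 ≠ v →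
      G.Adj s.1 t.1 := by
    rintro s t (⟨h, -⟩ : _ ∧ _) hs ht
    rcases h with h | ⟨h1, -⟩ | ⟨h1, -⟩
    exacts [h, absurd h1 hs, absurd h1 ht]
  have edge_v : ∀ {t : {x : V // x ≠ w}}, (Identify G v w).Adj ⟨v, hvw⟩ t → t.1 ≠ v →
      G.Adj v t.1 ∨ G.Adj w t.1 := by
    rintro t (⟨h, -⟩ : _ ∧ _) ht
    rcases h with h | ⟨-, h2⟩ | ⟨h1, -⟩
    exacts [Or.inl h, Or.inr h2, absurd h1 ht]
  by_cases hv : (⟨v, hvw⟩ : {x : V // x ≠ w}) ∈ c0.support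
  · obtain ⟨a, b, c, d, h1, h2, h3e, h4, h5e, hp⟩ :=
      walk5_decomp (c0.rotate _ hv) (by
        rw [← Walk.length_edges, (Walk.rotate_edges c0 _ hv).perm.length_eq, Walk.length_edges]
        exact hlen)
    have hcyc1 := hcyc.rotate hv
    rw [hp] at hcyc1
    have hnd := hcyc1.support_nodup
    simp at hnd
    obtain ⟨⟨nab, nac, nad, nav⟩, ⟨nbc, nbd, nbv⟩, ⟨ncd, ncv⟩, ndv⟩ := hnd
    have av : a.1 ≠ v := fun h => nav (Subtype.ext h)
    have bv : b.1 ≠ v := fun h => nbv (Subtype.ext h)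
    have cv : c.1 ≠ v := fun h => ncv (Subtype.ext h)
    have dv : d.1 ≠ v := fun h => ndv (Subtype.ext h)
    have hac' : a.1 ≠ c.1 := fun h => nac (Subtype.ext h)
    have had' : a.1 ≠ d.1 := fun h => nad (Subtype.ext h)
    have hbd' : b.1 ≠ d.1 := fun h => nbd (Subtype.ext h)
    have gab : G.Adj a.1 b.1 := edge_int h2 av bv
    have gbc : G.Adj b.1 c.1 := edge_int h3e bv cv
    have gcd : G.Adj c.1 d.1 := edge_int h4 cv dv
    rcases edge_v h1 av with hva | hwa <;> rcases edge_v h5e.symm dv with hvd | hwd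
    · obtain ⟨z, cy, hc, hl⟩ := mkCycle5 hva gab gbc gcd hvd.symm
        (Ne.symm bv) (Ne.symm cv) hac' had' hbd'
      exact absurd hl (h5 z cy hc)
    · -- v-a and w-d : build the 7-cycle v a b c d w x v
      have hxa : a.1 ≠ x := by
        intro h
        have hwa : G.Adj w a.1 := by rw [h]; exact hwx
        obtain ⟨z, cy, hc, hl⟩ := mkCycle5 hwa gab gbc gcd hwd.symm
          (Ne.symm b.2) (Ne.symm c.2) hac' had' hbd'
        exact absurd hl (h5 z cy hc)
      have hxb : b.1 ≠ x := by
        intro h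
        have hbv : G.Adj b.1 v := by rw [h]; exact hvx.symm
        obtain ⟨z, cy, hc, hl⟩ := mkCycle3 hva gab hbv
        exact absurd hl (h3 z cy hc)
      have hxc : c.1 ≠ x := by
        intro h
        have hwc : G.Adj w c.1 := by rw [h]; exact hwx
        obtain ⟨z, cy, hc, hl⟩ := mkCycle3 gcd hwd.symm hwc
        exact absurd hl (h3 z cy hc)
      have hxd : d.1 ≠ x := by
        intro h
        have hdv : G.Adj d.1 v := by rw [h]; exact hvx.symm
        obtain ⟨z, cy, hc, hl⟩ := mkCycle5 hva gab gbc gcd hdv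
          (Ne.symm bv) (Ne.symm cv) hac' had' hbd'
        exact absurd hl (h5 z cy hc)
      exact mkCycle7 hva gab gbc gcd hwd.symm hwx hvx.symm
        (Ne.symm bv) (Ne.symm cv) (Ne.symm dv) hvw
        hac' had' a.2 hxa hbd' b.2 hxb c.2 hxc hxd
    · -- w-a and v-d : build the 7-cycle v d c b a w x v
      have hxd : d.1 ≠ x := by
        intro h
        have hwd : G.Adj w d.1 := by rw [h]; exact hwx
        obtain ⟨z, cy, hc, hl⟩ := mkCycle5 hwa gab gbc gcd hwd.symm
          (Ne.symm b.2) (Ne.symm c.2) hac' had' hbd'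
        exact absurd hl (h5 z cy hc)
      have hxa : a.1 ≠ x := by
        intro h
        have hva : G.Adj v a.1 := by rw [h]; exact hvx
        obtain ⟨z, cy, hc, hl⟩ := mkCycle5 hva gab gbc gcd hvd.symm
          (Ne.symm bv) (Ne.symm cv) hac' had' hbd'
        exact absurd hl (h5 z cy hc)
      have hxb : b.1 ≠ x := by
        intro h
        have hbw : G.Adj b.1 w := by rw [h]; exact hwx.symm
        obtain ⟨z, cy, hc, hl⟩ := mkCycle3 hwa gab hbw
        exact absurd hl (h3 z cy hc)
      have hxc : c.1 ≠ x := by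
        intro h
        have hvc : G.Adj v c.1 := by rw [h]; exact hvx
        obtain ⟨z, cy, hc, hl⟩ := mkCycle3 hvc gcd hvd.symm
        exact absurd hl (h3 z cy hc)
      have nbc' : b.1 ≠ c.1 := gbc.ne
      exact mkCycle7 hvd gcd.symm gbc.symm gab.symm hwa.symm hwx hvx.symm
        (Ne.symm cv) (Ne.symm bv) (Ne.symm av) hvw
        (Ne.symm hbd') (Ne.symm had') d.2 hxd
        (Ne.symm hac') c.2 hxc b.2 hxb hxa
    · obtain ⟨z, cy, hc, hl⟩ := mkCycle5 hwa gab gbc gcd hwd.symm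
        (Ne.symm b.2) (Ne.symm c.2) hac' had' hbd'
      exact absurd hl (h5 z cy hc)
  · obtain ⟨a, b, c, d, h1, h2, h3e, h4, h5e, hp⟩ := walk5_decomp c0 hlen
    have nv : ∀ s : {x : V // x ≠ w}, s ∈ c0.support → s.1 ≠ v := by
      intro s hs h
      exact hv (by rwa [show s = ⟨v, hvw⟩ from Subtype.ext h] at hs)
    have ha0 : a0.1 ≠ v := nv a0 c0.start_mem_support
    have ha : a.1 ≠ v := nv a (by rw [hp]; simp)
    have hb : b.1 ≠ v := nv b (by rw [hp]; simp)
    have hc' : c.1 ≠ v := nv c (by rw [hp]; simp)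
    have hd : d.1 ≠ v := nv d (by rw [hp]; simp)
    have g1 : G.Adj a0.1 a.1 := edge_int h1 ha0 ha
    have g2 : G.Adj a.1 b.1 := edge_int h2 ha hb
    have g3 : G.Adj b.1 c.1 := edge_int h3e hb hc'
    have g4 : G.Adj c.1 d.1 := edge_int h4 hc' hd
    have g5 : G.Adj d.1 a0.1 := edge_int h5e hd ha0
    rw [hp] at hcyc
    have hnd := hcyc.support_nodup
    simp at hnd
    obtain ⟨⟨nab, nac, nad, naa0⟩, ⟨nbc, nbd, nba0⟩, ⟨ncd, nca0⟩, nda0⟩ := hnd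
    obtain ⟨z, cy, hcy, hl⟩ := mkCycle5 g1 g2 g3 g4 g5
      (fun h => nba0 (Subtype.ext h.symm)) (fun h => nca0 (Subtype.ext h.symm))
      (fun h => nac (Subtype.ext h)) (fun h => nad (Subtype.ext h))
      (fun h => nbd (Subtype.ext h))
    exact absurd hl (h5 z cy hcy)
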